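/- arXiv:2410.09434 — 7 statements merged into one kernel-verified Lean document; each statement's English description precedes it below -/
import Mathlib

section
/- Let G = (V,E) be a finite graph with a positive weight function w on its edges, let M be a matching of G, let e ∈ E with e ∉ M, and let α ≥ 1. Then there exists a positive weight function w' on E that coincides with w on E ∖ {e}, and a matching M'' of G, such that w'(M'') > α·w'(M). (This is the adversary argument behind the paper's Lemma 1: any α-approximate matching discovery algorithm must include in its output matching every edge of the input whose weight it never inspects.) -/
/-- A matching of a graph with edge set `E` (edges as unordered pairs of vertices):
a subset of `E` in which no two distinct edges share an endpoint. -/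
def IsGraphMatching {V : Type*} (E M : Finset (Sym2 V)) : Prop :=
  M ⊆ E ∧ ∀ e₁ ∈ M, ∀ e₂ ∈ M, e₁ ≠ e₂ → ∀ v : V, ¬(v ∈ e₁ ∧ v ∈ e₂)

/-! Giving the unseen edge `e` a weight above `max 0 (α · w(M))` makes the single edge `{e}` a
matching heavier than `α` times `M`, while `w(M)` itself is unchanged because `e ∉ M`. -/

theorem isGraphMatching_singleton {V : Type*} {E : Finset (Sym2 V)} {e : Sym2 V} (he : e ∈ E) :
    IsGraphMatching E {e} := by
  refine ⟨Finset.singleton_subset_iff.mpr he, fun e₁ h₁ e₂ h₂ hne => absurd ?_ hne⟩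
  rw [Finset.mem_singleton.mp h₁, Finset.mem_singleton.mp h₂]

theorem stmt0_general {V : Type*}
    (E : Finset (Sym2 V)) (w : Sym2 V → ℝ) (hw : ∀ f ∈ E, 0 < w f)
    (M : Finset (Sym2 V))
    (e : Sym2 V) (heE : e ∈ E) (heM : e ∉ M) (α : ℝ) :
    ∃ w' : Sym2 V → ℝ, (∀ f ∈ E, 0 < w' f) ∧ (∀ f ∈ E, f ≠ e → w' f = w f) ∧
      ∃ M'' : Finset (Sym2 V), IsGraphMatching E M'' ∧
        α * (∑ f ∈ M, w' f) < ∑ f ∈ M'', w' f := by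
  classical
  set K : ℝ := max 0 (α * ∑ f ∈ M, w f) + 1
  have hK_pos : 0 < K := by positivity
  have hK_gt : α * ∑ f ∈ M, w f < K := by linarith [le_max_right 0 (α * ∑ f ∈ M, w f)]
  refine ⟨Function.update w e K, fun f hf => ?_, fun f _ hfe => Function.update_of_ne hfe K w,
    {e}, isGraphMatching_singleton heE, ?_⟩
  · rcases eq_or_ne f e with rfl | hfe
    · simpa using hK_pos
    · simpa [Function.update_of_ne hfe] using hw f hf
  · simpa [Finset.sum_update_of_notMem heM] using hK_gt

/-- Adversary argument behind Lemma 1: if `M` is a matching and `e ∈ E` is an edge not in `M`,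
then for any `α ≥ 1` one can change the weight of `e` alone (keeping all weights positive)
so that some matching `M''` has weight more than `α` times the weight of `M`. -/
theorem stmt0 {V : Type*} [Fintype V] [DecidableEq V]
    (E : Finset (Sym2 V)) (w : Sym2 V → ℝ) (hw : ∀ f ∈ E, 0 < w f)
    (M : Finset (Sym2 V)) (hM : IsGraphMatching E M)
    (e : Sym2 V) (heE : e ∈ E) (heM : e ∉ M) (α : ℝ) (hα : 1 ≤ α) :
    ∃ w' : Sym2 V → ℝ, (∀ f ∈ E, 0 < w' f) ∧ (∀ f ∈ E, f ≠ e → w' f = w f) ∧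
      ∃ M'' : Finset (Sym2 V), IsGraphMatching E M'' ∧
        α * (∑ f ∈ M, w' f) < ∑ f ∈ M'', w' f :=
  stmt0_general E w hw M e heE heM α
end

section
/- Assume the β-strong P-order assumption holds for some β ≥ 0. Then every Greedy-Local matching M' satisfies w(M) ≤ (1+β)·w(M') for every matching M of the instance; in other words, the Greedy-Local algorithm has approximation ratio at most 1+β. -/
/-- A matching of a bipartite instance with edge set `E ⊆ P × C`
(`P` identified with `Fin s`, `C` with `Fin q`): a subset of `E` in which
no two distinct edges share their `P`-endpoint or their `C`-endpoint. -/
def IsBipMatching {s q : ℕ} (E M : Finset (Fin s × Fin q)) : Prop :=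
  M ⊆ E ∧ ∀ e₁ ∈ M, ∀ e₂ ∈ M, e₁ ≠ e₂ → e₁.1 ≠ e₂.1 ∧ e₁.2 ≠ e₂.2

/-- The β-strong P-order assumption. -/
def StrongPOrder {s q : ℕ} (E : Finset (Fin s × Fin q)) (w : Fin s × Fin q → ℝ)
    (β : ℝ) : Prop :=
  ∀ i j : Fin s, i < j → ∀ c : Fin q, (i, c) ∈ E → (j, c) ∈ E → w (j, c) ≤ β * w (i, c)

/-- A Greedy-Local matching: a matching `M'` such that every edge `(p_j, c) ∈ E \ M'`
is either blocked (some `(p_i, c) ∈ M'` with `i < j`) or dominated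
(some `(p_j, c') ∈ M'` with `w (p_j, c') ≥ w (p_j, c)`). -/
def GreedyLocal {s q : ℕ} (E : Finset (Fin s × Fin q)) (w : Fin s × Fin q → ℝ)
    (M' : Finset (Fin s × Fin q)) : Prop :=
  IsBipMatching E M' ∧ ∀ e ∈ E, e ∉ M' →
    (∃ i : Fin s, i < e.1 ∧ (i, e.2) ∈ M') ∨
    (∃ c' : Fin q, (e.1, c') ∈ M' ∧ w e ≤ w (e.1, c'))

/-!
Charge every edge `e` of `M` to an edge of `M'`. If `e` is dominated, it is charged to the
`M'`-edge of its own `P`-endpoint, which is at least as heavy; otherwise `e` is blocked, and it is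
charged to the earlier `M'`-edge at its `C`-endpoint, whose weight is at least `w e / β` by the
strong order assumption. Since `M` is a matching, each of the two charging maps is injective, so
the dominated edges weigh at most `w(M')` and the blocked ones at most `β · w(M')`.
-/

open Finset

theorem Finset.sum_le_mul_sum_of_exists_label {ι κ γ : Type*} {S : Finset ι} {T : Finset κ}
    {u : ι → ℝ} {v : κ → ℝ} {c : ℝ} (hc : 0 ≤ c) (hv : ∀ b ∈ T, 0 ≤ v b)
    {label : ι → γ} {label' : κ → γ} (hlabel : Set.InjOn label S)
    (h : ∀ a ∈ S, ∃ b ∈ T, label' b = label a ∧ u a ≤ c * v b) :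
    ∑ a ∈ S, u a ≤ c * ∑ b ∈ T, v b := by
  classical
  obtain rfl | ⟨a₀, ha₀⟩ := S.eq_empty_or_nonempty
  · simpa using mul_nonneg hc (sum_nonneg hv)
  have : Nonempty κ := ⟨(h a₀ ha₀).choose⟩
  choose! g hgT hglabel hgu using h
  have hg : Set.InjOn g S := fun a ha a' ha' hgg =>
    hlabel ha ha' (by rw [← hglabel a ha, ← hglabel a' ha', hgg])
  calc ∑ a ∈ S, u a ≤ ∑ a ∈ S, c * v (g a) := sum_le_sum hgu
    _ = c * ∑ b ∈ S.image g, v b := by rw [sum_image hg, mul_sum]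
    _ ≤ c * ∑ b ∈ T, v b := by
        gcongr
        · exact fun b hb _ => hv b hb
        · exact image_subset_iff.mpr hgT

section Matching

variable {s q : ℕ} {E M : Finset (Fin s × Fin q)}

theorem IsBipMatching.injOn_fst (hM : IsBipMatching E M) :
    Set.InjOn Prod.fst (M : Set (Fin s × Fin q)) :=
  fun e he e' he' h => by_contra fun hne => (hM.2 e he e' he' hne).1 h

theorem IsBipMatching.injOn_snd (hM : IsBipMatching E M) :
    Set.InjOn Prod.snd (M : Set (Fin s × Fin q)) :=
  fun e he e' he' h => by_contra fun hne => (hM.2 e he e' he' hne).2 h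

end Matching

theorem GreedyLocal.dominated_or_charged {s q : ℕ} {E : Finset (Fin s × Fin q)}
    {w : Fin s × Fin q → ℝ} {β : ℝ} {M' : Finset (Fin s × Fin q)} (hM' : GreedyLocal E w M')
    (hord : StrongPOrder E w β) {e : Fin s × Fin q} (he : e ∈ E) :
    (∃ c', (e.1, c') ∈ M' ∧ w e ≤ w (e.1, c')) ∨ ∃ i, (i, e.2) ∈ M' ∧ w e ≤ β * w (i, e.2) := by
  by_cases heM' : e ∈ M'
  · exact Or.inl ⟨e.2, heM', le_rfl⟩
  rcases hM'.2 e he heM' with ⟨i, hi, hiM'⟩ | hdom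
  · exact Or.inr ⟨i, hiM', hord i e.1 hi e.2 (hM'.1.1 hiM') he⟩
  · exact Or.inl hdom

/-- Under the β-strong P-order assumption, the Greedy-Local algorithm is (1+β)-approximate. -/
theorem stmt1 {s q : ℕ} (E : Finset (Fin s × Fin q)) (w : Fin s × Fin q → ℝ)
    (hw : ∀ e ∈ E, 0 < w e) (β : ℝ) (hβ : 0 ≤ β) (hord : StrongPOrder E w β)
    (M' : Finset (Fin s × Fin q)) (hM' : GreedyLocal E w M')
    (M : Finset (Fin s × Fin q)) (hM : IsBipMatching E M) :
    ∑ e ∈ M, w e ≤ (1 + β) * ∑ e ∈ M', w e := by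
  classical
  set dominated : Fin s × Fin q → Prop := fun e => ∃ c', (e.1, c') ∈ M' ∧ w e ≤ w (e.1, c')
  have hw' : ∀ e ∈ M', 0 ≤ w e := fun e he => (hw e (hM'.1.1 he)).le
  have hdom : ∑ e ∈ M with dominated e, w e ≤ 1 * ∑ e ∈ M', w e := by
    refine sum_le_mul_sum_of_exists_label (label' := Prod.fst) zero_le_one hw'
      (hM.injOn_fst.mono (coe_subset.mpr (filter_subset _ _))) fun e he => ?_
    obtain ⟨-, c', hc'M', hc'⟩ := mem_filter.mp he
    exact ⟨(e.1, c'), hc'M', rfl, by rwa [one_mul]⟩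
  have hblocked : ∑ e ∈ M with ¬dominated e, w e ≤ β * ∑ e ∈ M', w e := by
    refine sum_le_mul_sum_of_exists_label (label' := Prod.snd) hβ hw'
      (hM.injOn_snd.mono (coe_subset.mpr (filter_subset _ _))) fun e he => ?_
    obtain ⟨heM, hnd⟩ := mem_filter.mp he
    obtain ⟨i, hiM', hi⟩ := (hM'.dominated_or_charged hord (hM.1 heM)).resolve_left hnd
    exact ⟨(i, e.2), hiM', rfl, hi⟩
  rw [← sum_filter_add_sum_filter_not M dominated, add_mul]
  exact add_le_add hdom hblocked
end

section
/- Assume both the β-strong P-order and the γ-strong C-order assumptions hold for some β ≥ 0 and γ ≥ 0. Then every Naive-Local matching M' satisfies w(M) ≤ max{1, β+γ}·w(M') for every matching M of the instance; hence the Naive-Local algorithm, which inspects no weights at all, is max{1, β+γ}-approximate. -/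
/-- The γ-strong C-order assumption. -/
def StrongCOrder {s q : ℕ} (E : Finset (Fin s × Fin q)) (w : Fin s × Fin q → ℝ)
    (γ : ℝ) : Prop :=
  ∀ i j : Fin q, i < j → ∀ p : Fin s, (p, i) ∈ E → (p, j) ∈ E → w (p, j) ≤ γ * w (p, i)

/-- A Naive-Local matching: a matching `M'` such that every edge `(p_j, c_x) ∈ E \ M'`
is either blocked (some `(p_i, c_x) ∈ M'` with `i < j`) or skipped in favour of an
earlier C-neighbor (some `(p_j, c_y) ∈ M'` with `y < x`). -/
def NaiveLocal {s q : ℕ} (E M' : Finset (Fin s × Fin q)) : Prop :=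
  IsBipMatching E M' ∧ ∀ e ∈ E, e ∉ M' →
    (∃ i : Fin s, i < e.1 ∧ (i, e.2) ∈ M') ∨
    (∃ y : Fin q, y < e.2 ∧ (e.1, y) ∈ M')

open Finset

lemma Finset.sum_le_sum_sum_filter_of_forall_exists {ι κ : Type*} {s : Finset ι} {t : Finset κ}
    {R : κ → ι → Prop} [DecidableRel R] {w : ι → ℝ} (hw : ∀ i ∈ s, 0 ≤ w i)
    (h : ∀ i ∈ s, ∃ j ∈ t, R j i) :
    ∑ i ∈ s, w i ≤ ∑ j ∈ t, ∑ i ∈ s with R j i, w i :=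
  calc ∑ i ∈ s, w i ≤ ∑ i ∈ s, ∑ j ∈ t with R j i, w i := sum_le_sum fun i hi => by
        obtain ⟨j, hjt, hji⟩ := h i hi
        exact single_le_sum (f := fun _ => w i) (fun _ _ => hw i hi) (mem_filter.2 ⟨hjt, hji⟩)
    _ = ∑ j ∈ t, ∑ i ∈ s with R j i, w i := by
        simp only [sum_filter]
        exact sum_comm

lemma Finset.sum_le_of_card_le_one {ι : Type*} {s : Finset ι} {w : ι → ℝ} {b : ℝ}
    (hs : #s ≤ 1) (hb : 0 ≤ b) (h : ∀ i ∈ s, w i ≤ b) : ∑ i ∈ s, w i ≤ b := by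
  refine (sum_le_card_nsmul s w b h).trans ?_
  rw [nsmul_eq_mul]
  exact mul_le_of_le_one_left hb (by exact_mod_cast hs)

section

variable {s q : ℕ} {E M M' : Finset (Fin s × Fin q)} {w : Fin s × Fin q → ℝ} {β γ : ℝ}
  {e f : Fin s × Fin q}

def AccountsFor (f e : Fin s × Fin q) : Prop :=
  f = e ∨ (f.2 = e.2 ∧ f.1 < e.1) ∨ (f.1 = e.1 ∧ f.2 < e.2)

instance : DecidableRel (@AccountsFor s q) := fun f e => by
  unfold AccountsFor
  infer_instance

lemma NaiveLocal.exists_accountsFor (hM' : NaiveLocal E M') (he : e ∈ E) :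
    ∃ f ∈ M', AccountsFor f e := by
  by_cases heM' : e ∈ M'
  · exact ⟨e, heM', Or.inl rfl⟩
  rcases hM'.2 e he heM' with ⟨i, hi, hiM'⟩ | ⟨y, hy, hyM'⟩
  · exact ⟨(i, e.2), hiM', Or.inr (Or.inl ⟨rfl, hi⟩)⟩
  · exact ⟨(e.1, y), hyM', Or.inr (Or.inr ⟨rfl, hy⟩)⟩

lemma StrongPOrder.le_mul_of_snd_eq (h : StrongPOrder E w β) (hf : f ∈ E) (he : e ∈ E)
    (hsnd : f.2 = e.2) (hfst : f.1 < e.1) : w e ≤ β * w f := by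
  obtain ⟨i, c⟩ := f
  obtain ⟨j, c'⟩ := e
  obtain rfl : c = c' := hsnd
  exact h i j hfst c hf he

lemma StrongCOrder.le_mul_of_fst_eq (h : StrongCOrder E w γ) (hf : f ∈ E) (he : e ∈ E)
    (hfst : f.1 = e.1) (hsnd : f.2 < e.2) : w e ≤ γ * w f := by
  obtain ⟨p, x⟩ := f
  obtain ⟨p', y⟩ := e
  obtain rfl : p = p' := hfst
  exact h x y hsnd p hf he

namespace IsBipMatching

lemma eq_of_fst_eq (hM : IsBipMatching E M) (he : e ∈ M) (hf : f ∈ M) (h : e.1 = f.1) :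
    e = f :=
  by_contra fun hne => (hM.2 e he f hf hne).1 h

lemma eq_of_snd_eq (hM : IsBipMatching E M) (he : e ∈ M) (hf : f ∈ M) (h : e.2 = f.2) :
    e = f :=
  by_contra fun hne => (hM.2 e he f hf hne).2 h

lemma filter_accountsFor_of_mem (hM : IsBipMatching E M) (hf : f ∈ M) :
    {e ∈ M | AccountsFor f e} = {f} := by
  ext e
  simp only [mem_filter, mem_singleton]
  constructor
  · rintro ⟨he, rfl | ⟨hsnd, -⟩ | ⟨hfst, -⟩⟩
    · rfl
    · exact (hM.eq_of_snd_eq hf he hsnd).symm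
    · exact (hM.eq_of_fst_eq hf he hfst).symm
  · rintro rfl
    exact ⟨hf, Or.inl rfl⟩

lemma sum_filter_snd_eq_le (hM : IsBipMatching E M) (hw : ∀ e ∈ E, 0 ≤ w e) (hβ : 0 ≤ β)
    (hordP : StrongPOrder E w β) (hf : f ∈ E) :
    ∑ e ∈ M with f.2 = e.2 ∧ f.1 < e.1, w e ≤ β * w f := by
  refine sum_le_of_card_le_one ?_ (mul_nonneg hβ (hw f hf)) fun e he => ?_
  · refine card_le_one.2 fun a ha b hb => ?_
    rw [mem_filter] at ha hb
    exact hM.eq_of_snd_eq ha.1 hb.1 (ha.2.1.symm.trans hb.2.1)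
  · obtain ⟨he, hsnd, hfst⟩ := mem_filter.1 he
    exact hordP.le_mul_of_snd_eq hf (hM.1 he) hsnd hfst

lemma sum_filter_fst_eq_le (hM : IsBipMatching E M) (hw : ∀ e ∈ E, 0 ≤ w e) (hγ : 0 ≤ γ)
    (hordC : StrongCOrder E w γ) (hf : f ∈ E) :
    ∑ e ∈ M with f.1 = e.1 ∧ f.2 < e.2, w e ≤ γ * w f := by
  refine sum_le_of_card_le_one ?_ (mul_nonneg hγ (hw f hf)) fun e he => ?_
  · refine card_le_one.2 fun a ha b hb => ?_
    rw [mem_filter] at ha hb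
    exact hM.eq_of_fst_eq ha.1 hb.1 (ha.2.1.symm.trans hb.2.1)
  · obtain ⟨he, hfst, hsnd⟩ := mem_filter.1 he
    exact hordC.le_mul_of_fst_eq hf (hM.1 he) hfst hsnd

lemma sum_filter_accountsFor_le (hM : IsBipMatching E M) (hw : ∀ e ∈ E, 0 ≤ w e) (hβ : 0 ≤ β)
    (hγ : 0 ≤ γ) (hordP : StrongPOrder E w β) (hordC : StrongCOrder E w γ) (hf : f ∈ E) :
    ∑ e ∈ M with AccountsFor f e, w e ≤ max 1 (β + γ) * w f := by
  by_cases hfM : f ∈ M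
  · rw [hM.filter_accountsFor_of_mem hfM, sum_singleton]
    exact le_mul_of_one_le_left (hw f hf) (le_max_left _ _)
  have hsplit : {e ∈ M | AccountsFor f e} =
      {e ∈ M | f.2 = e.2 ∧ f.1 < e.1} ∪ {e ∈ M | f.1 = e.1 ∧ f.2 < e.2} := by
    rw [← filter_or]
    refine filter_congr fun e he => or_iff_right ?_
    rintro rfl
    exact hfM he
  have hdisj : Disjoint {e ∈ M | f.2 = e.2 ∧ f.1 < e.1} {e ∈ M | f.1 = e.1 ∧ f.2 < e.2} :=
    disjoint_filter.2 fun e _ hP hC => hP.2.ne hC.1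
  calc ∑ e ∈ M with AccountsFor f e, w e
      = ∑ e ∈ M with f.2 = e.2 ∧ f.1 < e.1, w e + ∑ e ∈ M with f.1 = e.1 ∧ f.2 < e.2, w e := by
        rw [hsplit, sum_union hdisj]
    _ ≤ β * w f + γ * w f :=
        add_le_add (hM.sum_filter_snd_eq_le hw hβ hordP hf) (hM.sum_filter_fst_eq_le hw hγ hordC hf)
    _ = (β + γ) * w f := (add_mul _ _ _).symm
    _ ≤ max 1 (β + γ) * w f := mul_le_mul_of_nonneg_right (le_max_right _ _) (hw f hf)

end IsBipMatching

end

/-- Under both the β-strong P-order and the γ-strong C-order assumptions,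
the Naive-Local algorithm (which inspects no weights) is max{1, β+γ}-approximate. -/
theorem stmt4 {s q : ℕ} (E : Finset (Fin s × Fin q)) (w : Fin s × Fin q → ℝ)
    (hw : ∀ e ∈ E, 0 < w e) (β γ : ℝ) (hβ : 0 ≤ β) (hγ : 0 ≤ γ)
    (hordP : StrongPOrder E w β) (hordC : StrongCOrder E w γ)
    (M' : Finset (Fin s × Fin q)) (hM' : NaiveLocal E M')
    (M : Finset (Fin s × Fin q)) (hM : IsBipMatching E M) :
    ∑ e ∈ M, w e ≤ max 1 (β + γ) * ∑ e ∈ M', w e := by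
  have hw₀ : ∀ e ∈ E, 0 ≤ w e := fun e he => (hw e he).le
  calc ∑ e ∈ M, w e ≤ ∑ f ∈ M', ∑ e ∈ M with AccountsFor f e, w e :=
        sum_le_sum_sum_filter_of_forall_exists (fun e he => hw₀ e (hM.1 he))
          fun e he => hM'.exists_accountsFor (hM.1 he)
    _ ≤ ∑ f ∈ M', max 1 (β + γ) * w f :=
        sum_le_sum fun f hf => hM.sum_filter_accountsFor_le hw₀ hβ hγ hordP hordC (hM'.1.1 hf)
    _ = max 1 (β + γ) * ∑ f ∈ M', w f := (mul_sum _ _ _).symm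
end

section
/- Assume both the β-strong P-order and the γ-strong C-order assumptions hold for some β ≥ 0 and γ ≥ 0 with β+γ ≤ 1. Then every Naive-Local matching M' is a maximum-weight matching: w(M) ≤ w(M') for every matching M of the instance. -/
/-!
Charge every edge `e` of a matching `M` to an edge of the Naive-Local matching `M'`: to itself
if `e ∈ M'`, otherwise to the edge of `M'` that blocked it at its `C`-endpoint (from an earlier
`p`), or else to the edge of `M'` at its `P`-endpoint (an earlier `c`). An edge `f ∈ M' \ M`
receives at most one charge through each endpoint, of weight at most `β * w f` and `γ * w f`
respectively, so it absorbs at most `(β + γ) * w f ≤ w f`.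
-/

open Finset

lemma Finset.sum_le_mul_sum_of_injOn_of_exists {α κ : Type*} {A B : Finset α} {f g : α → ℝ}
    {c : ℝ} (hc : 0 ≤ c) (hg : ∀ b ∈ B, 0 ≤ g b) (k : α → κ) (hk : Set.InjOn k A)
    (h : ∀ a ∈ A, ∃ b ∈ B, k b = k a ∧ f a ≤ c * g b) :
    ∑ a ∈ A, f a ≤ c * ∑ b ∈ B, g b := by
  classical
  choose! φ hφB hφk hφf using h
  have hφinj : Set.InjOn φ A := fun a₁ h₁ a₂ h₂ h₁₂ =>
    hk h₁ h₂ (by rw [← hφk a₁ h₁, ← hφk a₂ h₂, h₁₂])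
  calc ∑ a ∈ A, f a ≤ ∑ a ∈ A, c * g (φ a) := sum_le_sum hφf
    _ = c * ∑ b ∈ A.image φ, g b := by rw [sum_image hφinj, mul_sum]
    _ ≤ c * ∑ b ∈ B, g b := mul_le_mul_of_nonneg_left
      (sum_le_sum_of_subset_of_nonneg (image_subset_iff.mpr hφB) fun b hb _ => hg b hb) hc

namespace IsBipMatching

variable {s q : ℕ} {E M : Finset (Fin s × Fin q)}

lemma injOn_fst_s5 (hM : IsBipMatching E M) : Set.InjOn Prod.fst (M : Set (Fin s × Fin q)) := by
  intro e₁ h₁ e₂ h₂ h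
  by_contra hne
  exact (hM.2 e₁ h₁ e₂ h₂ hne).1 h

lemma injOn_snd_s5 (hM : IsBipMatching E M) : Set.InjOn Prod.snd (M : Set (Fin s × Fin q)) := by
  intro e₁ h₁ e₂ h₂ h
  by_contra hne
  exact (hM.2 e₁ h₁ e₂ h₂ hne).2 h

end IsBipMatching

section Charging

variable {s q : ℕ} {E M M' : Finset (Fin s × Fin q)} {w : Fin s × Fin q → ℝ}

def BlockedByEarlierP (M' : Finset (Fin s × Fin q)) (e : Fin s × Fin q) : Prop :=
  ∃ i, i < e.1 ∧ (i, e.2) ∈ M'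

lemma sum_filter_blockedByEarlierP_le (hw : ∀ f ∈ M', 0 ≤ w f) {β : ℝ} (hβ : 0 ≤ β)
    (hordP : StrongPOrder E w β) (hM : IsBipMatching E M) (hM'E : M' ⊆ E)
    [DecidablePred (BlockedByEarlierP M')] :
    ∑ e ∈ (M \ M').filter (BlockedByEarlierP M'), w e ≤ β * ∑ f ∈ M' \ M, w f := by
  refine sum_le_mul_sum_of_injOn_of_exists hβ (fun f hf => hw f (mem_sdiff.1 hf).1)
    Prod.snd (hM.injOn_snd_s5.mono fun e he => (mem_sdiff.1 (mem_filter.1 he).1).1) ?_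
  intro e he
  obtain ⟨⟨heM, -⟩, i, hi, hiM'⟩ := by simpa only [mem_filter, mem_sdiff] using he
  have hiM : (i, e.2) ∉ M := fun hiM => hi.ne (congrArg Prod.fst (hM.injOn_snd_s5 hiM heM rfl))
  exact ⟨(i, e.2), mem_sdiff.2 ⟨hiM', hiM⟩, rfl, hordP i e.1 hi e.2 (hM'E hiM') (hM.1 heM)⟩

lemma sum_filter_not_blockedByEarlierP_le (hw : ∀ f ∈ M', 0 ≤ w f) {γ : ℝ} (hγ : 0 ≤ γ)
    (hordC : StrongCOrder E w γ) (hM : IsBipMatching E M) (hM' : NaiveLocal E M')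
    [DecidablePred (BlockedByEarlierP M')] :
    ∑ e ∈ (M \ M').filter (¬ BlockedByEarlierP M' ·), w e ≤ γ * ∑ f ∈ M' \ M, w f := by
  have hM'E := hM'.1.1
  refine sum_le_mul_sum_of_injOn_of_exists hγ (fun f hf => hw f (mem_sdiff.1 hf).1)
    Prod.fst (hM.injOn_fst_s5.mono fun e he => (mem_sdiff.1 (mem_filter.1 he).1).1) ?_
  intro e he
  obtain ⟨⟨heM, heM'⟩, hnb⟩ := by simpa only [mem_filter, mem_sdiff] using he
  obtain ⟨y, hy, hyM'⟩ := (hM'.2 e (hM.1 heM) heM').resolve_left hnb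
  have hyM : (e.1, y) ∉ M := fun hyM => hy.ne (congrArg Prod.snd (hM.injOn_fst_s5 hyM heM rfl))
  exact ⟨(e.1, y), mem_sdiff.2 ⟨hyM', hyM⟩, rfl, hordC y e.2 hy e.1 (hM'E hyM') (hM.1 heM)⟩

end Charging

/-- Under both the β-strong P-order and the γ-strong C-order assumptions with β + γ ≤ 1,
every Naive-Local matching is a maximum-weight matching. -/
theorem stmt5 {s q : ℕ} (E : Finset (Fin s × Fin q)) (w : Fin s × Fin q → ℝ)
    (hw : ∀ e ∈ E, 0 < w e) (β γ : ℝ) (hβ : 0 ≤ β) (hγ : 0 ≤ γ)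
    (hsum : β + γ ≤ 1)
    (hordP : StrongPOrder E w β) (hordC : StrongCOrder E w γ)
    (M' : Finset (Fin s × Fin q)) (hM' : NaiveLocal E M')
    (M : Finset (Fin s × Fin q)) (hM : IsBipMatching E M) :
    ∑ e ∈ M, w e ≤ ∑ e ∈ M', w e := by
  classical
  have hw' : ∀ f ∈ M', 0 ≤ w f := fun f hf => (hw f (hM'.1.1 hf)).le
  have hP := sum_filter_blockedByEarlierP_le hw' hβ hordP hM hM'.1.1
  have hC := sum_filter_not_blockedByEarlierP_le hw' hγ hordC hM hM'
  have hfree : 0 ≤ ∑ f ∈ M' \ M, w f := sum_nonneg fun f hf => hw' f (mem_sdiff.1 hf).1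
  calc ∑ e ∈ M, w e
      = ∑ e ∈ M ∩ M', w e + ∑ e ∈ M \ M', w e := (sum_inter_add_sum_sdiff M M' w).symm
    _ ≤ ∑ e ∈ M' ∩ M, w e + (β + γ) * ∑ f ∈ M' \ M, w f := by
      rw [← sum_filter_add_sum_filter_not (M \ M') (BlockedByEarlierP M'), inter_comm]
      linarith
    _ ≤ ∑ e ∈ M' ∩ M, w e + ∑ f ∈ M' \ M, w f := by
      gcongr
      exact mul_le_of_le_one_left hfree hsum
    _ = ∑ e ∈ M', w e := sum_inter_add_sum_sdiff M' M w
end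

section
/- Fix the bipartite instance with P = {p_1,p_2}, C = {c_1,c_2}, E = {(p_1,c_1),(p_1,c_2),(p_2,c_1)} and the orders given by the indices. For all β > 0 and γ > 0 with β+γ ≥ 1, and for every matching M' of this instance, there exists a positive weight function w on E satisfying both the β-strong P-order and the γ-strong C-order assumptions, and a matching M of the instance, such that w(M) ≥ (β+γ)·w(M'). (Hence no matching discovery algorithm that inspects zero weights can be better than (β+γ)-approximate under these assumptions.) -/
/-- The fixed instance with P = {p₁, p₂}, C = {c₁, c₂} and
E = {(p₁,c₁), (p₁,c₂), (p₂,c₁)}. -/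
def E₀ : Finset (Fin 2 × Fin 2) := {(0, 0), (0, 1), (1, 0)}

/-- Auxiliary weight function: `a` on (0,0), `b` on (0,1), `c` on (1,0). -/
def Wgt (a b c : ℝ) : Fin 2 × Fin 2 → ℝ := fun e => ![![a, b], ![c, 1]] e.1 e.2

lemma Wgt00 (a b c : ℝ) : Wgt a b c (0, 0) = a := rfl
lemma Wgt01 (a b c : ℝ) : Wgt a b c (0, 1) = b := rfl
lemma Wgt10 (a b c : ℝ) : Wgt a b c (1, 0) = c := rfl

lemma keyP (β a b c : ℝ) (h : c ≤ β * a) : StrongPOrder E₀ (Wgt a b c) β := by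
  intro i j hij c' hic hjc
  fin_cases i <;> fin_cases j <;> fin_cases c' <;>
    first
      | exact absurd hij (by decide)
      | exact absurd hjc (by decide)
      | exact h

lemma keyC (γ a b c : ℝ) (h : b ≤ γ * a) : StrongCOrder E₀ (Wgt a b c) γ := by
  intro i j hij p hip hjp
  fin_cases i <;> fin_cases j <;> fin_cases p <;>
    first
      | exact absurd hij (by decide)
      | exact absurd hjp (by decide)
      | exact h

lemma Wpos (a b c : ℝ) (ha : 0 < a) (hb : 0 < b) (hc : 0 < c) :
    ∀ e ∈ E₀, 0 < Wgt a b c e := by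
  intro e he
  fin_cases he
  · exact ha
  · exact hb
  · exact hc

lemma match1 : IsBipMatching E₀ {((0 : Fin 2), (0 : Fin 2))} :=
  ⟨by decide, by decide⟩

lemma match2 : IsBipMatching E₀ {((0 : Fin 2), (1 : Fin 2)), ((1 : Fin 2), (0 : Fin 2))} :=
  ⟨by decide, by decide⟩

/-- On the fixed instance `E₀`, for all β, γ > 0 with β + γ ≥ 1 and every matching `M'`,
there is a positive weight function satisfying both strong order assumptions and a matching `M`
with `w(M) ≥ (β+γ)·w(M')`: no algorithm inspecting zero weights beats ratio β + γ. -/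
theorem stmt7 (β γ : ℝ) (hβ : 0 < β) (hγ : 0 < γ) (hsum : 1 ≤ β + γ)
    (M' : Finset (Fin 2 × Fin 2)) (hM' : IsBipMatching E₀ M') :
    ∃ w : Fin 2 × Fin 2 → ℝ, (∀ e ∈ E₀, 0 < w e) ∧
      StrongPOrder E₀ w β ∧ StrongCOrder E₀ w γ ∧
      ∃ M : Finset (Fin 2 × Fin 2), IsBipMatching E₀ M ∧
        (β + γ) * ∑ e ∈ M', w e ≤ ∑ e ∈ M, w e := by
  have hbg : (0:ℝ) < β + γ := by linarith
  by_cases h00 : ((0:Fin 2), (0:Fin 2)) ∈ M'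
  · -- M' = {(0,0)}
    have hMeq : M' = {((0:Fin 2), (0:Fin 2))} := by
      apply Finset.eq_singleton_iff_unique_mem.2
      refine ⟨h00, ?_⟩
      intro e he
      by_contra hne
      have heE := hM'.1 he
      have hd := hM'.2 e he _ h00 hne
      fin_cases heE <;> simp_all
    refine ⟨Wgt 1 γ β, Wpos 1 γ β one_pos hγ hβ,
      keyP β 1 γ β (by linarith), keyC γ 1 γ β (by linarith),
      {((0:Fin 2),(1:Fin 2)), ((1:Fin 2),(0:Fin 2))}, match2, ?_⟩
    rw [hMeq, Finset.sum_singleton, Finset.sum_pair (by decide), Wgt00, Wgt01, Wgt10]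
    linarith
  · -- M' ⊆ {(0,1),(1,0)}
    have hδpos : (0:ℝ) < 1 / (2 * (β + γ)) := by positivity
    set δ : ℝ := 1 / (2 * (β + γ)) with hδ
    have hbpos : 0 < min γ δ := lt_min hγ hδpos
    have hcpos : 0 < min β δ := lt_min hβ hδpos
    refine ⟨Wgt 1 (min γ δ) (min β δ), Wpos _ _ _ one_pos hbpos hcpos,
      keyP β 1 _ _ (by rw [mul_one]; exact min_le_left β δ),
      keyC γ 1 _ _ (by rw [mul_one]; exact min_le_left γ δ),
      {((0:Fin 2),(0:Fin 2))}, match1, ?_⟩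
    have hsub : M' ⊆ {((0:Fin 2),(1:Fin 2)), ((1:Fin 2),(0:Fin 2))} := by
      intro e he
      have heE := hM'.1 he
      fin_cases heE <;> simp_all
    have hle : ∑ e ∈ M', Wgt 1 (min γ δ) (min β δ) e ≤
        ∑ e ∈ ({((0:Fin 2),(1:Fin 2)), ((1:Fin 2),(0:Fin 2))} : Finset _),
          Wgt 1 (min γ δ) (min β δ) e := by
      apply Finset.sum_le_sum_of_subset_of_nonneg hsub
      intro e he _
      fin_cases he
      · exact le_of_lt hbpos
      · exact le_of_lt hcpos
    rw [Finset.sum_pair (by decide), Wgt01, Wgt10] at hle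
    have h1 : min γ δ ≤ δ := min_le_right _ _
    have h2 : min β δ ≤ δ := min_le_right _ _
    have hsum' : ∑ e ∈ M', Wgt 1 (min γ δ) (min β δ) e ≤ 2 * δ := by linarith
    have hkey : (β + γ) * (2 * δ) = 1 := by
      rw [hδ]; field_simp
    rw [Finset.sum_singleton, Wgt00]
    calc (β + γ) * ∑ e ∈ M', Wgt 1 (min γ δ) (min β δ) e
        ≤ (β + γ) * (2 * δ) := by
          exact mul_le_mul_of_nonneg_left hsum' (le_of_lt hbg)
      _ = 1 := hkey
end

section
/- For every ε with 0 < ε < 1, every γ > 1+ε, and every integer ℓ ≥ 1, set β = (1−ε)·γ. Then there exists a bipartite instance satisfying the β-ℓ-weak P-order and the γ-ℓ-weak C-order assumptions, together with: a maximal matching M' consisting of a single edge e = (p_1,c_1) such that w(e) ≥ w(p_1,c) for every c among the ℓ+1 first C-neighbors of p_1 in C-order and w(e) ≥ w(p,c_1) for every p among the ℓ+1 first P-neighbors of c_1 in P-order; and a matching M satisfying w(M) ≥ (2·max{1, β, γ}/(1+ε))·w(M'). (This exhibits instances on which the ℓ-Double-Greedy algorithm is no better than (2·max{1,β_ℓ,γ_ℓ})/(1+ε)-approximate.)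 -/
/-- The βℓ-ℓ-weak P-order assumption. -/
def WeakPOrder {s q : ℕ} (E : Finset (Fin s × Fin q)) (w : Fin s × Fin q → ℝ)
    (ℓ : ℕ) (βℓ : ℝ) : Prop :=
  ∀ i j : Fin s, i < j → ∀ c : Fin q, (i, c) ∈ E → (j, c) ∈ E →
    ℓ ≤ (Finset.univ.filter (fun x : Fin s => i < x ∧ x < j ∧ (x, c) ∈ E)).card →
    w (j, c) ≤ βℓ * w (i, c)

/-- The γℓ-ℓ-weak C-order assumption. -/
def WeakCOrder {s q : ℕ} (E : Finset (Fin s × Fin q)) (w : Fin s × Fin q → ℝ)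
    (ℓ : ℕ) (γℓ : ℝ) : Prop :=
  ∀ i j : Fin q, i < j → ∀ p : Fin s, (p, i) ∈ E → (p, j) ∈ E →
    ℓ ≤ (Finset.univ.filter (fun x : Fin q => i < x ∧ x < j ∧ (p, x) ∈ E)).card →
    w (p, j) ≤ γℓ * w (p, i)

/-- The C-neighbors of `p` in `E`. -/
def cNbrs {s q : ℕ} (E : Finset (Fin s × Fin q)) (p : Fin s) : Finset (Fin q) :=
  Finset.univ.filter (fun c : Fin q => (p, c) ∈ E)

/-- The ℓ+1 first C-neighbors of `p` in C-order. -/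
def firstCNbrs {s q : ℕ} (E : Finset (Fin s × Fin q)) (ℓ : ℕ) (p : Fin s) : Finset (Fin q) :=
  (cNbrs E p).filter (fun c : Fin q => ((cNbrs E p).filter (fun c' : Fin q => c' < c)).card ≤ ℓ)

/-- The P-neighbors of `c` in `E`. -/
def pNbrs {s q : ℕ} (E : Finset (Fin s × Fin q)) (c : Fin q) : Finset (Fin s) :=
  Finset.univ.filter (fun p : Fin s => (p, c) ∈ E)

/-- The ℓ+1 first P-neighbors of `c` in P-order. -/
def firstPNbrs {s q : ℕ} (E : Finset (Fin s × Fin q)) (ℓ : ℕ) (c : Fin q) : Finset (Fin s) :=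
  (pNbrs E c).filter (fun p : Fin s => ((pNbrs E c).filter (fun p' : Fin s => p' < p)).card ≤ ℓ)

/-!
The instance is the double star on `ℓ + 2` vertices per side: all edges at `p₁` or at `c₁`,
with weight `γ` on `(p₁, c_{ℓ+2})`, weight `β` on `(p_{ℓ+2}, c₁)` and weight `1` elsewhere.
Two neighbours of a vertex have at least `ℓ` neighbours between them only if they are the first
and the last vertex, so the weak order assumptions reduce to `β ≤ β · 1` and `γ ≤ γ · 1`.
The edge `(p₁, c₁)` alone is a maximal matching of weight `1` dominating the first `ℓ + 1`
neighbours of its endpoints, while the two heavy edges form a matching of weight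
`β + γ = (2 - ε) γ ≥ 2 γ / (1 + ε)`.
-/

open Finset

section Instance

variable {s q : ℕ}

def swapEdges (E : Finset (Fin s × Fin q)) : Finset (Fin q × Fin s) :=
  E.map (Equiv.prodComm _ _).toEmbedding

@[simp]
theorem mem_swapEdges {E : Finset (Fin s × Fin q)} {e : Fin q × Fin s} :
    e ∈ swapEdges E ↔ e.swap ∈ E :=
  mem_map_equiv

theorem weakCOrder_iff_weakPOrder_swap {E : Finset (Fin s × Fin q)} {w : Fin s × Fin q → ℝ}
    {ℓ : ℕ} {γ : ℝ} : WeakCOrder E w ℓ γ ↔ WeakPOrder (swapEdges E) (w ∘ Prod.swap) ℓ γ := by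
  simp [WeakCOrder, WeakPOrder]

theorem pNbrs_eq_cNbrs_swapEdges (E : Finset (Fin s × Fin q)) (c : Fin q) :
    pNbrs E c = cNbrs (swapEdges E) c := by
  ext
  simp [pNbrs, cNbrs]

theorem firstPNbrs_eq_firstCNbrs_swapEdges (E : Finset (Fin s × Fin q)) (ℓ : ℕ) (c : Fin q) :
    firstPNbrs E ℓ c = firstCNbrs (swapEdges E) ℓ c := by
  rw [firstPNbrs, firstCNbrs, pNbrs_eq_cNbrs_swapEdges]

theorem val_le_of_mem_firstCNbrs {E : Finset (Fin s × Fin q)} {ℓ : ℕ} {p : Fin s} {c : Fin q}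
    (hE : cNbrs E p = univ) (hc : c ∈ firstCNbrs E ℓ p) : (c : ℕ) ≤ ℓ := by
  rw [firstCNbrs, hE, mem_filter, filter_gt_eq_Iio, Fin.card_Iio] at hc
  exact hc.2

theorem isBipMatching_singleton {E : Finset (Fin s × Fin q)} {e : Fin s × Fin q}
    (he : e ∈ E) : IsBipMatching E {e} :=
  ⟨singleton_subset_iff.2 he, by simp⟩

theorem isBipMatching_pair {E : Finset (Fin s × Fin q)} {e f : Fin s × Fin q}
    (he : e ∈ E) (hf : f ∈ E) (h₁ : e.1 ≠ f.1) (h₂ : e.2 ≠ f.2) : IsBipMatching E {e, f} := by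
  refine ⟨insert_subset he (singleton_subset_iff.2 hf), ?_⟩
  simp only [mem_insert, mem_singleton]
  rintro _ (rfl | rfl) _ (rfl | rfl) hne <;> simp_all [Ne.symm]

end Instance

theorem Fin.eq_zero_and_eq_last_of_le_card_between {ℓ : ℕ} {i j : Fin (ℓ + 2)}
    {p : Fin (ℓ + 2) → Prop} [DecidablePred p] (hij : i < j)
    (h : ℓ ≤ #{x | i < x ∧ x < j ∧ p x}) : i = 0 ∧ j = Fin.last _ := by
  have hcard : #{x | i < x ∧ x < j ∧ p x} ≤ (j : ℕ) - i - 1 := by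
    rw [← Fin.card_Ioo]
    exact card_le_card fun x hx => by simp_all
  have hj := j.isLt
  rw [Fin.lt_def] at hij
  simp only [Fin.ext_iff, Fin.val_zero, Fin.val_last]
  omega

section DoubleStar

variable {ℓ : ℕ} {a b : ℝ}

def doubleStarEdges (ℓ : ℕ) : Finset (Fin (ℓ + 2) × Fin (ℓ + 2)) :=
  {e | e.1 = 0 ∨ e.2 = 0}

def doubleStarWeight (ℓ : ℕ) (a b : ℝ) (e : Fin (ℓ + 2) × Fin (ℓ + 2)) : ℝ :=
  if e = (0, Fin.last _) then a else if e = (Fin.last _, 0) then b else 1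

@[simp]
theorem mem_doubleStarEdges {e : Fin (ℓ + 2) × Fin (ℓ + 2)} :
    e ∈ doubleStarEdges ℓ ↔ e.1 = 0 ∨ e.2 = 0 := by
  simp [doubleStarEdges]

theorem swapEdges_doubleStarEdges : swapEdges (doubleStarEdges ℓ) = doubleStarEdges ℓ := by
  ext; simp [or_comm]

theorem doubleStarWeight_comp_swap :
    doubleStarWeight ℓ a b ∘ Prod.swap = doubleStarWeight ℓ b a := by
  ext ⟨x, y⟩
  simp only [doubleStarWeight, Function.comp_apply, Prod.swap_prod_mk, Prod.mk.injEq]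
  split_ifs <;> simp_all

theorem doubleStarWeight_pos (ha : 0 < a) (hb : 0 < b) (e) : 0 < doubleStarWeight ℓ a b e := by
  unfold doubleStarWeight; split_ifs <;> positivity

theorem doubleStarWeight_zero_zero : doubleStarWeight ℓ a b (0, 0) = 1 := by
  simp [doubleStarWeight, Fin.last_pos.ne]

theorem doubleStarWeight_zero_last : doubleStarWeight ℓ a b (0, Fin.last _) = a := by
  simp [doubleStarWeight]

theorem doubleStarWeight_last_zero : doubleStarWeight ℓ a b (Fin.last _, 0) = b := by
  simp [doubleStarWeight, Fin.last_pos.ne']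

theorem weakPOrder_doubleStar : WeakPOrder (doubleStarEdges ℓ) (doubleStarWeight ℓ a b) ℓ b := by
  intro i j hij c hi hj hcard
  obtain rfl : c = 0 := by simp at hi hj; omega
  obtain ⟨rfl, rfl⟩ := Fin.eq_zero_and_eq_last_of_le_card_between hij hcard
  simp [doubleStarWeight_zero_zero, doubleStarWeight_last_zero]

theorem weakCOrder_doubleStar : WeakCOrder (doubleStarEdges ℓ) (doubleStarWeight ℓ a b) ℓ a := by
  rw [weakCOrder_iff_weakPOrder_swap, swapEdges_doubleStarEdges, doubleStarWeight_comp_swap]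
  exact weakPOrder_doubleStar

theorem doubleStarWeight_le_of_mem_firstCNbrs {c : Fin (ℓ + 2)}
    (hc : c ∈ firstCNbrs (doubleStarEdges ℓ) ℓ 0) :
    doubleStarWeight ℓ a b (0, c) ≤ doubleStarWeight ℓ a b (0, 0) := by
  have hE : cNbrs (doubleStarEdges ℓ) 0 = univ := by ext; simp [cNbrs]
  have hc_ne : c ≠ Fin.last _ := by
    rintro rfl
    simpa using val_le_of_mem_firstCNbrs hE hc
  simp [doubleStarWeight, hc_ne, Fin.last_pos.ne]

theorem doubleStarWeight_le_of_mem_firstPNbrs {p : Fin (ℓ + 2)}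
    (hp : p ∈ firstPNbrs (doubleStarEdges ℓ) ℓ 0) :
    doubleStarWeight ℓ a b (p, 0) ≤ doubleStarWeight ℓ a b (0, 0) := by
  rw [firstPNbrs_eq_firstCNbrs_swapEdges, swapEdges_doubleStarEdges] at hp
  have := doubleStarWeight_le_of_mem_firstCNbrs (a := b) (b := a) hp
  rwa [← doubleStarWeight_comp_swap] at this

end DoubleStar

theorem two_mul_max_div_le {ε γ : ℝ} (hε0 : 0 ≤ ε) (hε1 : ε ≤ 1) (hγ : 1 ≤ γ) :
    2 * max 1 (max ((1 - ε) * γ) γ) / (1 + ε) ≤ γ + (1 - ε) * γ := by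
  have hβγ : (1 - ε) * γ ≤ γ := by nlinarith
  rw [max_eq_right hβγ, max_eq_right hγ, div_le_iff₀ (by linarith)]
  nlinarith [mul_nonneg (mul_nonneg hε0 (sub_nonneg.2 hε1)) (zero_le_one.trans hγ)]

theorem stmt13_general (ε γ : ℝ) (hε0 : 0 < ε) (hε1 : ε < 1) (hγ : 1 + ε < γ)
    (ℓ : ℕ) (β : ℝ) (hβ : β = (1 - ε) * γ) :
    ∃ (s q : ℕ) (hs : 0 < s) (hq : 0 < q) (E : Finset (Fin s × Fin q))
      (w : Fin s × Fin q → ℝ),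
      (∀ e ∈ E, 0 < w e) ∧ WeakPOrder E w ℓ β ∧ WeakCOrder E w ℓ γ ∧
      ∃ M' M : Finset (Fin s × Fin q),
        M' = {(⟨0, hs⟩, ⟨0, hq⟩)} ∧ IsBipMatching E M' ∧
        (∀ f ∈ E, ∃ g ∈ M', f.1 = g.1 ∨ f.2 = g.2) ∧
        (∀ c ∈ firstCNbrs E ℓ ⟨0, hs⟩, w (⟨0, hs⟩, c) ≤ w (⟨0, hs⟩, ⟨0, hq⟩)) ∧
        (∀ p ∈ firstPNbrs E ℓ ⟨0, hq⟩, w (p, ⟨0, hq⟩) ≤ w (⟨0, hs⟩, ⟨0, hq⟩)) ∧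
        IsBipMatching E M ∧
        (2 * max 1 (max β γ) / (1 + ε)) * ∑ e ∈ M', w e ≤ ∑ e ∈ M, w e := by
  have hβ0 : 0 < β := hβ ▸ mul_pos (by linarith) (by linarith)
  have hlast : Fin.last (ℓ + 1) ≠ 0 := Fin.last_pos.ne'
  refine ⟨ℓ + 2, ℓ + 2, by omega, by omega, doubleStarEdges ℓ, doubleStarWeight ℓ γ β,
    fun e _ => doubleStarWeight_pos (by linarith) hβ0 e, weakPOrder_doubleStar,
    weakCOrder_doubleStar, {(0, 0)}, {(0, Fin.last _), (Fin.last _, 0)}, rfl,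
    isBipMatching_singleton (by simp),
    fun f hf => ⟨(0, 0), mem_singleton_self _, by simpa using hf⟩,
    fun c => doubleStarWeight_le_of_mem_firstCNbrs,
    fun p => doubleStarWeight_le_of_mem_firstPNbrs,
    isBipMatching_pair (by simp) (by simp) hlast.symm hlast, ?_⟩
  rw [sum_singleton, sum_pair (by simp [hlast]), doubleStarWeight_zero_zero,
    doubleStarWeight_zero_last, doubleStarWeight_last_zero, mul_one, hβ]
  exact two_mul_max_div_le hε0.le hε1.le (by linarith)

/-- Lower-bound instances for the ℓ-Double-Greedy algorithm: for every 0 < ε < 1, γ > 1+ε,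
ℓ ≥ 1 and β = (1−ε)·γ, there is an instance satisfying the β-ℓ-weak P-order and γ-ℓ-weak
C-order assumptions with a maximal matching `M' = {(p₁,c₁)}` whose single edge dominates the
ℓ+1 first C-neighbors of p₁ and the ℓ+1 first P-neighbors of c₁, and a matching `M` with
`w(M) ≥ (2·max{1,β,γ}/(1+ε))·w(M')`. -/
theorem stmt13 (ε γ : ℝ) (hε0 : 0 < ε) (hε1 : ε < 1) (hγ : 1 + ε < γ)
    (ℓ : ℕ) (hℓ : 1 ≤ ℓ) (β : ℝ) (hβ : β = (1 - ε) * γ) :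
    ∃ (s q : ℕ) (hs : 0 < s) (hq : 0 < q) (E : Finset (Fin s × Fin q))
      (w : Fin s × Fin q → ℝ),
      (∀ e ∈ E, 0 < w e) ∧ WeakPOrder E w ℓ β ∧ WeakCOrder E w ℓ γ ∧
      ∃ M' M : Finset (Fin s × Fin q),
        M' = {(⟨0, hs⟩, ⟨0, hq⟩)} ∧ IsBipMatching E M' ∧
        (∀ f ∈ E, ∃ g ∈ M', f.1 = g.1 ∨ f.2 = g.2) ∧
        (∀ c ∈ firstCNbrs E ℓ ⟨0, hs⟩, w (⟨0, hs⟩, c) ≤ w (⟨0, hs⟩, ⟨0, hq⟩)) ∧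
        (∀ p ∈ firstPNbrs E ℓ ⟨0, hq⟩, w (p, ⟨0, hq⟩) ≤ w (⟨0, hs⟩, ⟨0, hq⟩)) ∧
        IsBipMatching E M ∧
        (2 * max 1 (max β γ) / (1 + ε)) * ∑ e ∈ M', w e ≤ ∑ e ∈ M, w e :=
  stmt13_general ε γ hε0 hε1 hγ ℓ β hβ
end

section
/- Let G = (V,E) be a finite graph with positive edge weights and a fixed enumeration E = e_1, …, e_m of its edges satisfying the ζ-strong E-order assumption for some ζ ≥ 0. Then every Naive-Edge matching M' satisfies w(M) ≤ 2·max{1, ζ}·w(M') for every matching M of G; in other words, the Naive-Edge algorithm, which inspects no weights, is 2·max{1,ζ}-approximate. -/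
/-!
Charge every edge `f` of `M` to an edge `g` of `M'` sharing an endpoint with it and with
`w f ≤ max 1 ζ · w g`: `g = f` if `f ∈ M'`, and otherwise the earlier selected edge `g` that
blocked `f`, for which `w f ≤ ζ · w g` by the E-order assumption. Since `M` is a matching, each `g` is
charged by at most two edges of `M`, one through each endpoint.
-/

open Finset

namespace IsGraphMatching

variable {V : Type*} {E M : Finset (Sym2 V)}

theorem card_le_two_of_forall_meets (hM : IsGraphMatching E M) {s : Finset (Sym2 V)}
    (hsM : s ⊆ M) (g : Sym2 V) (hs : ∀ f ∈ s, ∃ v, v ∈ g ∧ v ∈ f) : #s ≤ 2 := by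
  classical
  induction g using Sym2.ind with
  | _ a b =>
    have card_through_le_one (u : V) : #(s.filter (u ∈ ·)) ≤ 1 :=
      card_le_one.mpr fun f₁ h₁ f₂ h₂ => by
        rw [mem_filter] at h₁ h₂
        by_contra hne
        exact hM.2 f₁ (hsM h₁.1) f₂ (hsM h₂.1) hne u ⟨h₁.2, h₂.2⟩
    have hcover : s ⊆ s.filter (a ∈ ·) ∪ s.filter (b ∈ ·) := fun f hf => by
      obtain ⟨v, hvg, hvf⟩ := hs f hf
      rcases Sym2.mem_iff.mp hvg with rfl | rfl <;> simp [hf, hvf]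
    calc #s ≤ #(s.filter (a ∈ ·) ∪ s.filter (b ∈ ·)) := card_le_card hcover
      _ ≤ #(s.filter (a ∈ ·)) + #(s.filter (b ∈ ·)) := card_union_le _ _
      _ ≤ 2 := by linarith [card_through_le_one a, card_through_le_one b]

theorem sum_le_two_mul_sum (hM : IsGraphMatching E M) {M' : Finset (Sym2 V)}
    (w w' : Sym2 V → ℝ) (hw' : ∀ g ∈ M', 0 ≤ w' g)
    (hcharge : ∀ f ∈ M, ∃ g ∈ M', (∃ v, v ∈ g ∧ v ∈ f) ∧ w f ≤ w' g) :
    ∑ f ∈ M, w f ≤ 2 * ∑ g ∈ M', w' g := by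
  classical
  calc ∑ f ∈ M, w f
      ≤ ∑ f ∈ M, ∑ g ∈ M' with ∃ v, v ∈ g ∧ v ∈ f, w' g := sum_le_sum fun f hf => by
        obtain ⟨g, hg, hmeet, hle⟩ := hcharge f hf
        exact hle.trans <| single_le_sum (fun g' hg' => hw' g' (mem_filter.mp hg').1)
          (mem_filter.mpr ⟨hg, hmeet⟩)
    _ = ∑ g ∈ M', ∑ f ∈ M with ∃ v, v ∈ g ∧ v ∈ f, w' g :=
        sum_comm' fun f g => by simp only [mem_filter]; tauto
    _ = ∑ g ∈ M', #{f ∈ M | ∃ v, v ∈ g ∧ v ∈ f} * w' g := by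
        simp only [sum_const, nsmul_eq_mul]
    _ ≤ ∑ g ∈ M', 2 * w' g := sum_le_sum fun g hg => by
        gcongr
        · exact hw' g hg
        · exact_mod_cast hM.card_le_two_of_forall_meets (filter_subset _ M) g
            fun f hf => (mem_filter.mp hf).2
    _ = 2 * ∑ g ∈ M', w' g := (mul_sum _ _ _).symm

end IsGraphMatching

theorem exists_naiveEdge_charge {V : Type*} [DecidableEq V] {m : ℕ} {e : Fin m → Sym2 V}
    {w : Sym2 V → ℝ} (hw : ∀ i : Fin m, 0 < w (e i))
    {ζ : ℝ} (hord : ∀ i j : Fin m, i < j → w (e j) ≤ ζ * w (e i)) {M' : Finset (Sym2 V)}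
    (hNE : ∀ j : Fin m, e j ∉ M' →
      ∃ i : Fin m, i < j ∧ e i ∈ M' ∧ ∃ v : V, v ∈ e i ∧ v ∈ e j)
    {f : Sym2 V} (hf : f ∈ image e univ) :
    ∃ g ∈ M', (∃ v, v ∈ g ∧ v ∈ f) ∧ w f ≤ max 1 ζ * w g := by
  obtain ⟨j, -, rfl⟩ := mem_image.mp hf
  by_cases hj : e j ∈ M'
  · exact ⟨e j, hj, ⟨_, Sym2.out_fst_mem _, Sym2.out_fst_mem _⟩,
      le_mul_of_one_le_left (hw j).le (le_max_left _ _)⟩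
  · obtain ⟨i, hij, hi, hmeet⟩ := hNE j hj
    exact ⟨e i, hi, hmeet,
      (hord i j hij).trans (mul_le_mul_of_nonneg_right (le_max_right _ _) (hw i).le)⟩

theorem stmt14_general {V : Type*} [DecidableEq V] (m : ℕ)
    (e : Fin m → Sym2 V)
    (w : Sym2 V → ℝ) (hw : ∀ i : Fin m, 0 < w (e i))
    (ζ : ℝ) (hord : ∀ i j : Fin m, i < j → w (e j) ≤ ζ * w (e i))
    (M' : Finset (Sym2 V)) (hM' : IsGraphMatching (Finset.image e Finset.univ) M')
    (hNE : ∀ j : Fin m, e j ∉ M' →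
      ∃ i : Fin m, i < j ∧ e i ∈ M' ∧ ∃ v : V, v ∈ e i ∧ v ∈ e j)
    (M : Finset (Sym2 V)) (hM : IsGraphMatching (Finset.image e Finset.univ) M) :
    ∑ f ∈ M, w f ≤ 2 * max 1 ζ * ∑ f ∈ M', w f := by
  have hweight_nonneg : ∀ g ∈ M', 0 ≤ max 1 ζ * w g := fun g hg => by
    obtain ⟨i, -, rfl⟩ := mem_image.mp (hM'.1 hg)
    exact mul_nonneg (zero_le_one.trans (le_max_left _ _)) (hw i).le
  calc ∑ f ∈ M, w f ≤ 2 * ∑ g ∈ M', max 1 ζ * w g :=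
        hM.sum_le_two_mul_sum w _ hweight_nonneg fun f hf =>
          exists_naiveEdge_charge hw hord hNE (hM.1 hf)
    _ = 2 * max 1 ζ * ∑ f ∈ M', w f := by rw [← mul_sum, mul_assoc]

/-- Under the ζ-strong E-order assumption on the enumeration `e 0, …, e (m-1)` of the edges,
every Naive-Edge matching `M'` (every non-selected edge is blocked by an earlier selected
edge sharing one of its endpoints) is 2·max{1,ζ}-approximate. -/
theorem stmt14 {V : Type*} [Fintype V] [DecidableEq V] (m : ℕ)
    (e : Fin m → Sym2 V) (he : Function.Injective e)
    (w : Sym2 V → ℝ) (hw : ∀ i : Fin m, 0 < w (e i))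
    (ζ : ℝ) (hζ : 0 ≤ ζ) (hord : ∀ i j : Fin m, i < j → w (e j) ≤ ζ * w (e i))
    (M' : Finset (Sym2 V)) (hM' : IsGraphMatching (Finset.image e Finset.univ) M')
    (hNE : ∀ j : Fin m, e j ∉ M' →
      ∃ i : Fin m, i < j ∧ e i ∈ M' ∧ ∃ v : V, v ∈ e i ∧ v ∈ e j)
    (M : Finset (Sym2 V)) (hM : IsGraphMatching (Finset.image e Finset.univ) M) :
    ∑ f ∈ M, w f ≤ 2 * max 1 ζ * ∑ f ∈ M', w f :=
  stmt14_general m e w hw ζ hord M' hM' hNE M hM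
end
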